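/- arXiv:1101.2511 — 3 statements merged into one kernel-verified Lean document; each statement's English description precedes it below -/
import Mathlib

section
/- The sequence of abelian groups 0 → ℤ → ℚ × ∏_p ℤ_p → (∏_p ℤ_p) ⊗_ℤ ℚ → 0 is exact, where the first map sends n to (n, (n)_p) (diagonal) and the second sends (q, a) to a ⊗ 1 − (1)_p ⊗ q. -/
open scoped TensorProduct

/-- The prime `p` in `Nat.Primes` is prime. -/
instance (p : Nat.Primes) : Fact p.1.Prime := ⟨p.2⟩

/-- The profinite completion of `ℤ`: the product of the `p`-adic integers over all primes. -/
noncomputable abbrev Zhat : Type := ∀ p : Nat.Primes, ℤ_[p.1]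

/-- The diagonal map `ℤ → ℚ × ∏ₚ ℤₚ`, `n ↦ (n, (n)ₚ)`. -/
noncomputable def hasseFirst : ℤ → ℚ × Zhat := fun n => ((n : ℚ), fun p => (n : ℤ_[p.1]))

/-- The difference map `ℚ × ∏ₚ ℤₚ → (∏ₚ ℤₚ) ⊗ ℚ`, `(q, a) ↦ a ⊗ 1 - (1)ₚ ⊗ q`. -/
noncomputable def hasseSecond : ℚ × Zhat → Zhat ⊗[ℤ] ℚ :=
  fun x => x.2 ⊗ₜ[ℤ] (1 : ℚ) - (1 : Zhat) ⊗ₜ[ℤ] x.1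

/-!
An element `a ⊗ 1 - 1 ⊗ q` of `Zhat ⊗ ℚ` maps to `(a_p - q)_p` in `∏ₚ ℚₚ`; if this vanishes then
`q ∈ ℤₚ` for every `p`, so `q ∈ ℤ` and `a` is the diagonal image of `q`. Surjectivity comes from
`Zhat / n ≅ ℤ / n`: writing `a = n b + r` with `r ∈ ℤ` gives `a ⊗ n⁻¹ = b ⊗ 1 + 1 ⊗ r / n`.
-/

open TensorProduct

theorem Rat.den_eq_one_of_forall_norm_padic_le_one {q : ℚ}
    (h : ∀ p : Nat.Primes, ‖(q : ℚ_[p.1])‖ ≤ 1) : q.den = 1 := by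
  by_contra hden
  obtain ⟨p, hp, hpd⟩ := Nat.exists_prime_and_dvd hden
  have : Fact p.Prime := ⟨hp⟩
  exact Rat.padicValuation_le_one_iff.1
    ((Padic.norm_rat_le_one_iff_padicValuation_le_one p).1 (h ⟨p, hp⟩)) hpd

theorem exists_intCast_dvd_sub_of_coprime {R : Type*} [CommRing R] {m n : ℕ} (hmn : m.Coprime n)
    {a : R} (hm : ∃ r : ℤ, (m : R) ∣ a - r) (hn : ∃ r : ℤ, (n : R) ∣ a - r) :
    ∃ r : ℤ, ((m * n : ℕ) : R) ∣ a - r := by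
  obtain ⟨r₁, c₁, hc₁⟩ := hm
  obtain ⟨r₂, c₂, hc₂⟩ := hn
  obtain ⟨u, v, huv⟩ := Nat.isCoprime_iff_coprime.2 hmn
  have huv' : (u : R) * m + v * n = 1 := mod_cast congrArg (Int.cast : ℤ → R) huv
  refine ⟨u * m * r₂ + v * n * r₁, u * c₂ + v * c₁, ?_⟩
  push_cast
  linear_combination (u * m : R) * hc₂ + (v * n : R) * hc₁ - a * huv'

namespace Zhat

theorem natCast_pow_dvd_sub_appr (p : Nat.Primes) (k : ℕ) (a : Zhat) :
    ((p.1 ^ k : ℕ) : Zhat) ∣ a - ((a p).appr k : ℕ) := by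
  refine pi_dvd_iff.2 fun q => ?_
  simp only [Pi.natCast_apply, Pi.sub_apply, Nat.cast_pow]
  rcases eq_or_ne q p with rfl | hqp
  · exact Ideal.mem_span_singleton.1 (PadicInt.appr_spec k (a q))
  · have hcop : q.1.Coprime p.1 := (Nat.coprime_primes q.2 p.2).2 (Subtype.coe_injective.ne hqp)
    exact ((PadicInt.isUnit_iff.2 (PadicInt.norm_natCast_eq_one_iff.2 hcop)).pow k).dvd

theorem exists_intCast_dvd_sub {n : ℕ} (hn : n ≠ 0) (a : Zhat) : ∃ r : ℤ, (n : Zhat) ∣ a - r := by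
  induction n using Nat.recOnPrimeCoprime generalizing a with
  | zero => exact absurd rfl hn
  | prime_pow p k hp => exact ⟨_, natCast_pow_dvd_sub_appr ⟨p, hp⟩ k a⟩
  | coprime m n _ _ hmn ihm ihn =>
    exact exists_intCast_dvd_sub_of_coprime hmn (ihm (by omega) a) (ihn (by omega) a)

noncomputable def toPiPadic : Zhat →+* ∀ p : Nat.Primes, ℚ_[p.1] :=
  RingHom.pi fun p => PadicInt.Coe.ringHom.comp (Pi.evalRingHom _ p)

noncomputable def tensorRatToPiPadic : Zhat ⊗[ℤ] ℚ →ₐ[ℤ] ∀ p : Nat.Primes, ℚ_[p.1] :=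
  Algebra.TensorProduct.productMap toPiPadic.toIntAlgHom (algebraMap ℚ _).toIntAlgHom

theorem tensorRatToPiPadic_tmul (a : Zhat) (q : ℚ) (p : Nat.Primes) :
    tensorRatToPiPadic (a ⊗ₜ q) p = a p * q :=
  congrFun (Algebra.TensorProduct.productMap_apply_tmul _ _ a q) p

end Zhat

theorem hasseSecond_hasseFirst (n : ℤ) : hasseSecond (hasseFirst n) = 0 := by
  have : (fun p : Nat.Primes => (n : ℤ_[p.1])) = n • (1 : Zhat) := by
    funext p; simp
  rw [hasseSecond, hasseFirst, this, smul_tmul, zsmul_one, sub_self]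

theorem mem_range_hasseFirst_of_hasseSecond_eq_zero {x : ℚ × Zhat} (hx : hasseSecond x = 0) :
    x ∈ Set.range hasseFirst := by
  obtain ⟨q, a⟩ := x
  have hcoord (p : Nat.Primes) : (a p : ℚ_[p.1]) = q := by
    have := congrFun (congrArg Zhat.tensorRatToPiPadic hx) p
    simpa [hasseSecond, Zhat.tensorRatToPiPadic_tmul, sub_eq_zero] using this
  have hden : q.den = 1 := Rat.den_eq_one_of_forall_norm_padic_le_one fun p =>
    hcoord p ▸ (a p).norm_le_one
  refine ⟨q.num, Prod.ext (Rat.coe_int_num_of_den_eq_one hden) (funext fun p => ?_)⟩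
  apply PadicInt.ext
  rw [hcoord p, hasseFirst, PadicInt.coe_intCast, ← Rat.cast_intCast,
    Rat.coe_int_num_of_den_eq_one hden]

theorem hasseSecond_add (x y : ℚ × Zhat) :
    hasseSecond (x + y) = hasseSecond x + hasseSecond y := by
  simp only [hasseSecond, Prod.fst_add, Prod.snd_add, add_tmul, tmul_add]
  abel

theorem exists_hasseSecond_eq_tmul_inv (a : Zhat) {n : ℕ} (hn : n ≠ 0) :
    ∃ x, hasseSecond x = a ⊗ₜ (n : ℚ)⁻¹ := by
  obtain ⟨r, b, hb⟩ := Zhat.exists_intCast_dvd_sub hn a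
  refine ⟨(-(r / n : ℚ), b), ?_⟩
  rw [sub_eq_iff_eq_add, ← nsmul_eq_mul, ← zsmul_one] at hb
  rw [hb, hasseSecond, add_tmul, smul_tmul, smul_tmul, tmul_neg, sub_neg_eq_add]
  congr 2
  simp [hn]

theorem hasseFirst_injective : Function.Injective hasseFirst := fun m n h => by
  simpa [hasseFirst] using congrArg Prod.fst h

theorem exact_hasseFirst_hasseSecond : Function.Exact hasseFirst hasseSecond := fun _ =>
  ⟨mem_range_hasseFirst_of_hasseSecond_eq_zero, by rintro ⟨n, rfl⟩; exact hasseSecond_hasseFirst n⟩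

theorem hasseSecond_surjective : Function.Surjective hasseSecond := by
  intro z
  induction z using TensorProduct.induction_on with
  | zero => exact ⟨0, by simp [hasseSecond]⟩
  | tmul a q =>
    have hq : q = q.num • (q.den : ℚ)⁻¹ := by
      rw [zsmul_eq_mul, ← div_eq_mul_inv, Rat.num_div_den]
    rw [hq, ← smul_tmul]
    exact exists_hasseSecond_eq_tmul_inv _ q.den_nz
  | add u v hu hv =>
    obtain ⟨x, rfl⟩ := hu
    obtain ⟨y, rfl⟩ := hv
    exact ⟨x + y, hasseSecond_add x y⟩

/-- The arithmetic Hasse square: the sequence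
`0 → ℤ → ℚ × ∏ₚ ℤₚ → (∏ₚ ℤₚ) ⊗ ℚ → 0` is exact. -/
theorem hasse_square_exact :
    Function.Injective hasseFirst ∧ Function.Exact hasseFirst hasseSecond ∧
      Function.Surjective hasseSecond :=
  ⟨hasseFirst_injective, exact_hasseFirst_hasseSecond, hasseSecond_surjective⟩
end

section
/- Let R be a commutative ring with R-algebras R^l, R^c, R^t fitting in a commutative square R → R^l → R^t, R → R^c → R^t, such that the sequence of R-modules 0 → R → R^l ⊕ R^c → R^t → 0 (with maps r ↦ (r,r) and (x,y) ↦ x − y) is exact and R^t is flat as an R-module. Then for every R-module M the sequence 0 → M → (R^l ⊗_R M) ⊕ (R^c ⊗_R M) → R^t ⊗_R M → 0 is exact; in particular M is the pullback of R^l ⊗_R M and R^c ⊗_R M over R^t ⊗_R M. -/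
open scoped TensorProduct

variable (R Rl Rc Rt : Type) [CommRing R] [CommRing Rl] [CommRing Rc] [CommRing Rt]
  [Algebra R Rl] [Algebra R Rc] [Algebra R Rt]
  [Algebra Rl Rt] [Algebra Rc Rt] [IsScalarTower R Rl Rt] [IsScalarTower R Rc Rt]

/-- The map `R → R^l ⊕ R^c`, `r ↦ (r, r)`. -/
noncomputable def hasseRingFirst : R →ₗ[R] Rl × Rc :=
  (Algebra.linearMap R Rl).prod (Algebra.linearMap R Rc)

/-- The difference map `R^l ⊕ R^c → R^t`, `(x, y) ↦ x - y`. -/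
noncomputable def hasseRingSecond : Rl × Rc →ₗ[R] Rt :=
  ((IsScalarTower.toAlgHom R Rl Rt).toLinearMap.comp (LinearMap.fst R Rl Rc)) -
    ((IsScalarTower.toAlgHom R Rc Rt).toLinearMap.comp (LinearMap.snd R Rl Rc))

/-- The map `M → (R^l ⊗_R M) ⊕ (R^c ⊗_R M)`, `m ↦ (1 ⊗ m, 1 ⊗ m)`. -/
noncomputable def hasseModFirst (M : Type) [AddCommGroup M] [Module R M] :
    M →ₗ[R] (Rl ⊗[R] M) × (Rc ⊗[R] M) :=
  ((TensorProduct.mk R Rl M) (1 : Rl)).prod ((TensorProduct.mk R Rc M) (1 : Rc))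

/-- The difference map `(R^l ⊗_R M) ⊕ (R^c ⊗_R M) → R^t ⊗_R M`. -/
noncomputable def hasseModSecond (M : Type) [AddCommGroup M] [Module R M] :
    (Rl ⊗[R] M) × (Rc ⊗[R] M) →ₗ[R] Rt ⊗[R] M :=
  ((LinearMap.rTensor M (IsScalarTower.toAlgHom R Rl Rt).toLinearMap).comp
      (LinearMap.fst R (Rl ⊗[R] M) (Rc ⊗[R] M))) -
    ((LinearMap.rTensor M (IsScalarTower.toAlgHom R Rc Rt).toLinearMap).comp
      (LinearMap.snd R (Rl ⊗[R] M) (Rc ⊗[R] M)))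

/-! The `M`-row is the `R`-row tensored with `M`, up to `R ⊗ M ≃ M` and
`(R^l × R^c) ⊗ M ≃ (R^l ⊗ M) × (R^c ⊗ M)`. Tensoring keeps the row right exact, and the
flatness of `R^t` makes `R ⊗ M → (R^l × R^c) ⊗ M` injective (`Tor₁(R^t, M) = 0`). -/

open TensorProduct LinearMap

theorem hasseModFirst_comp_lid (M : Type) [AddCommGroup M] [Module R M] :
    hasseModFirst R Rl Rc M ∘ₗ (TensorProduct.lid R M).toLinearMap =
      (prodLeft R R Rl Rc M).toLinearMap ∘ₗ (hasseRingFirst R Rl Rc).rTensor M := by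
  apply TensorProduct.ext'
  intro r m
  simp [hasseRingFirst, hasseModFirst, smul_tmul', Algebra.algebraMap_eq_smul_one]

theorem hasseModSecond_comp_prodLeft (M : Type) [AddCommGroup M] [Module R M] :
    hasseModSecond R Rl Rc Rt M ∘ₗ (prodLeft R R Rl Rc M).toLinearMap =
      (hasseRingSecond R Rl Rc Rt).rTensor M := by
  apply TensorProduct.ext'
  rintro ⟨x, y⟩ m
  simp [hasseRingSecond, hasseModSecond]

/-- The algebraic Hasse square principle: if `0 → R → R^l ⊕ R^c → R^t → 0` is exact
and `R^t` is flat over `R`, then for every `R`-module `M` the sequence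
`0 → M → (R^l ⊗_R M) ⊕ (R^c ⊗_R M) → R^t ⊗_R M → 0` is exact; in particular `M` is
the pullback of `R^l ⊗_R M` and `R^c ⊗_R M` over `R^t ⊗_R M`. -/
theorem hasse_square_tensor_exact
    (hinj : Function.Injective (hasseRingFirst R Rl Rc))
    (hex : Function.Exact (hasseRingFirst R Rl Rc) (hasseRingSecond R Rl Rc Rt))
    (hsurj : Function.Surjective (hasseRingSecond R Rl Rc Rt))
    (hflat : Module.Flat R Rt)
    (M : Type) [AddCommGroup M] [Module R M] :
    Function.Injective (hasseModFirst R Rl Rc M) ∧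
      Function.Exact (hasseModFirst R Rl Rc M) (hasseModSecond R Rl Rc Rt M) ∧
      Function.Surjective (hasseModSecond R Rl Rc Rt M) := by
  have hfirst := hasseModFirst_comp_lid R Rl Rc M
  have hsecond := hasseModSecond_comp_prodLeft R Rl Rc Rt M
  have hinjM : Function.Injective ((hasseRingFirst R Rl Rc).rTensor M) := by
    rw [← lTensor_inj_iff_rTensor_inj]
    exact lTensor_injective_of_exact_of_flat _ hsurj _ hinj hex M
  refine ⟨?_, ?_, ?_⟩
  · refine Function.Injective.of_comp_right (g := TensorProduct.lid R M) ?_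
      (TensorProduct.lid R M).surjective
    rw [← LinearEquiv.coe_coe, ← LinearMap.coe_comp, hfirst]
    exact (prodLeft R R Rl Rc M).injective.comp hinjM
  · exact Function.Exact.of_ladder_linearEquiv_of_exact (e₃ := LinearEquiv.refl R _)
      hfirst hsecond (rTensor_exact M hex hsurj)
  · refine Function.Surjective.of_comp (g := prodLeft R R Rl Rc M) ?_
    rw [← LinearEquiv.coe_coe, ← LinearMap.coe_comp, hsecond]
    exact rTensor_surjective M hsurj
end

section
/- Let F : S → T and U : T → S be an adjoint pair of exact functors between compactly generated triangulated categories with coproducts, with U preserving coproducts. Let K be a set of compact objects of S such that for each A ∈ K the unit map A → U F A is an isomorphism. Then F and U restrict to mutually inverse equivalences between the localizing subcategory of S generated by K and the localizing subcategory of T generated by F(K). -/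
open CategoryTheory CategoryTheory.Limits CategoryTheory.Pretriangulated

section Defs

variable (C : Type) [Category C] [Preadditive C] [HasZeroObject C]
  [HasShift C ℤ] [∀ n : ℤ, (shiftFunctor C n).Additive] [Pretriangulated C]
  [HasCoproducts.{0} C]

/-- The canonical map `⊕ᵢ Hom(X, Yᵢ) → Hom(X, ∐ᵢ Yᵢ)`. -/
noncomputable def coproductComparison {ι : Type} [DecidableEq ι] (X : C) (Y : ι → C) :
    DirectSum ι (fun i => (X ⟶ Y i)) →+ (X ⟶ ∐ Y) :=
  DirectSum.toAddMonoid fun i =>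
    { toFun := fun f => f ≫ Sigma.ι Y i
      map_zero' := by simp
      map_add' := by intros; simp [Preadditive.add_comp] }

/-- An object `X` is compact if `Hom(X, −)` commutes with arbitrary coproducts. -/
def IsCompactObj (X : C) : Prop :=
  ∀ (ι : Type) (_ : DecidableEq ι) (Y : ι → C),
    Function.Bijective (coproductComparison C X Y)

/-- A class of objects of a triangulated category with coproducts is localizing if
it is closed under isomorphisms, shifts, cones of morphisms between its objects
(hence is a full triangulated subcategory), and arbitrary coproducts
(hence is also closed under retracts). -/
def IsLocalizingClass (P : Set C) : Prop :=
  (∀ X Y : C, (X ≅ Y) → X ∈ P → Y ∈ P) ∧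
  (∀ X ∈ P, ∀ n : ℤ, X⟦n⟧ ∈ P) ∧
  (∀ T ∈ distTriang C, T.obj₁ ∈ P → T.obj₂ ∈ P → T.obj₃ ∈ P) ∧
  (∀ (ι : Type) (Y : ι → C), (∀ i, Y i ∈ P) → (∐ Y) ∈ P)

/-- The localizing subcategory generated by a set of objects: the smallest
localizing class containing it. -/
def locGen (K : Set C) : Set C :=
  ⋂₀ {P : Set C | IsLocalizingClass C P ∧ K ⊆ P}

/-- A triangulated category with coproducts is compactly generated if there is a set
of compact objects whose generated localizing subcategory is everything. -/
def IsCompactlyGeneratedTriang : Prop :=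
  ∃ G : Set C, (∀ X ∈ G, IsCompactObj C X) ∧ locGen C G = Set.univ

end Defs

/-! The objects at which a shift-compatible natural transformation between triangulated,
coproduct-preserving functors is an isomorphism form a localizing class: shifts are handled by
the compatibility, cones by the five lemma for distinguished triangles, and coproducts by
comparing with the coproduct of the components. Apply this to the unit and the counit of
`F ⊣ U`, intersected with the preimages of `Loc(F K)` under `F` and of `Loc(K)` under `U`:
the resulting localizing classes contain `K`, resp. `F(K)` (the counit at `F A` is inverse to
`F` of the unit at `A`), hence contain the localizing subcategories these generate. -/

section Localizing

variable {C : Type} [Category C] [Preadditive C] [HasZeroObject C]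
  [HasShift C ℤ] [∀ n : ℤ, (shiftFunctor C n).Additive] [Pretriangulated C]
  [HasCoproducts.{0} C]

lemma IsLocalizingClass.sInter {Ps : Set (Set C)} (hPs : ∀ P ∈ Ps, IsLocalizingClass C P) :
    IsLocalizingClass C (⋂₀ Ps) := by
  refine ⟨?_, ?_, ?_, ?_⟩
  · exact fun X Y e hX P hP => (hPs P hP).1 X Y e (hX P hP)
  · exact fun X hX n P hP => (hPs P hP).2.1 X (hX P hP) n
  · exact fun Tr hTr h₁ h₂ P hP => (hPs P hP).2.2.1 Tr hTr (h₁ P hP) (h₂ P hP)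
  · exact fun ι Y hY P hP => (hPs P hP).2.2.2 ι Y fun i => hY i P hP

lemma IsLocalizingClass.inter {P Q : Set C} (hP : IsLocalizingClass C P)
    (hQ : IsLocalizingClass C Q) : IsLocalizingClass C (P ∩ Q) := by
  rw [← Set.sInter_pair]
  exact IsLocalizingClass.sInter (by simpa using And.intro hP hQ)

lemma isLocalizingClass_locGen (K : Set C) : IsLocalizingClass C (locGen C K) :=
  IsLocalizingClass.sInter fun _ hP => hP.1

lemma subset_locGen (K : Set C) : K ⊆ locGen C K :=
  Set.subset_sInter fun _ hP => hP.2

lemma locGen_subset {K P : Set C} (hP : IsLocalizingClass C P) (hKP : K ⊆ P) :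
    locGen C K ⊆ P :=
  Set.sInter_subset_of_mem ⟨hP, hKP⟩

variable {D : Type} [Category D] [Preadditive D] [HasZeroObject D]
  [HasShift D ℤ] [∀ n : ℤ, (shiftFunctor D n).Additive] [Pretriangulated D]
  [HasCoproducts.{0} D]

lemma IsLocalizingClass.preimage {G : C ⥤ D} [G.CommShift ℤ] [G.IsTriangulated]
    [∀ ι : Type, PreservesColimitsOfShape (Discrete ι) G] {P : Set D}
    (hP : IsLocalizingClass D P) : IsLocalizingClass C (G.obj ⁻¹' P) := by
  obtain ⟨hIso, hShift, hCone, hSigma⟩ := hP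
  refine ⟨?_, ?_, ?_, ?_⟩
  · exact fun X Y e hX => hIso _ _ (G.mapIso e) hX
  · exact fun X hX n => hIso _ _ ((G.commShiftIso n).symm.app X) (hShift _ hX n)
  · exact fun Tr hTr h₁ h₂ => hCone _ (G.map_distinguished Tr hTr) h₁ h₂
  · exact fun ι Y hY => hIso _ _ (asIso (sigmaComparison G Y)) (hSigma ι _ hY)

end Localizing

namespace CategoryTheory

section NatTrans

variable {C D : Type} [Category C] [Category D] {F₁ F₂ : C ⥤ D} (τ : F₁ ⟶ F₂)

lemma NatTrans.isIso_app_sigma {ι : Type} [HasCoproductsOfShape ι C] [HasCoproductsOfShape ι D]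
    [PreservesColimitsOfShape (Discrete ι) F₁] [PreservesColimitsOfShape (Discrete ι) F₂]
    (X : ι → C) [∀ i, IsIso (τ.app (X i))] : IsIso (τ.app (∐ X)) := by
  have h : τ.app (∐ X) = inv (sigmaComparison F₁ X) ≫
      Limits.Sigma.map (fun i => τ.app (X i)) ≫ sigmaComparison F₂ X := by
    rw [IsIso.eq_inv_comp]
    ext i
    simp
  rw [h]
  infer_instance

variable [HasShift C ℤ] [HasShift D ℤ] [F₁.CommShift ℤ] [F₂.CommShift ℤ] [NatTrans.CommShift τ ℤ]

lemma NatTrans.isIso_app_shift (X : C) [IsIso (τ.app X)] (n : ℤ) : IsIso (τ.app (X⟦n⟧)) := by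
  rw [NatTrans.app_shift τ n X]
  infer_instance

variable [Preadditive C] [Preadditive D] [∀ n : ℤ, (shiftFunctor C n).Additive]
  [∀ n : ℤ, (shiftFunctor D n).Additive]

def NatTrans.mapTriangleApp (Tr : Triangle C) : F₁.mapTriangle.obj Tr ⟶ F₂.mapTriangle.obj Tr :=
  Triangle.homMk (Triangle.mk _ _ _) (Triangle.mk _ _ _) (τ.app Tr.obj₁) (τ.app Tr.obj₂)
    (τ.app Tr.obj₃) (τ.naturality _) (τ.naturality _) (by
      show (F₁.map Tr.mor₃ ≫ _) ≫ (τ.app Tr.obj₁)⟦(1 : ℤ)⟧' = τ.app Tr.obj₃ ≫ F₂.map Tr.mor₃ ≫ _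
      rw [Category.assoc, NatTrans.shift_app_comm, NatTrans.naturality_assoc])

variable [HasZeroObject C] [HasZeroObject D] [Pretriangulated C] [Pretriangulated D]
  [F₁.IsTriangulated] [F₂.IsTriangulated]

lemma NatTrans.isIso_app_obj₃ {Tr : Triangle C} (hTr : Tr ∈ distTriang C)
    (h₁ : IsIso (τ.app Tr.obj₁)) (h₂ : IsIso (τ.app Tr.obj₂)) : IsIso (τ.app Tr.obj₃) :=
  isIso₃_of_isIso₁₂ (NatTrans.mapTriangleApp τ Tr) (F₁.map_distinguished Tr hTr)
    (F₂.map_distinguished Tr hTr) h₁ h₂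

lemma isLocalizingClass_setOf_isIso_app [HasCoproducts.{0} C] [HasCoproducts.{0} D]
    [∀ ι : Type, PreservesColimitsOfShape (Discrete ι) F₁]
    [∀ ι : Type, PreservesColimitsOfShape (Discrete ι) F₂] :
    IsLocalizingClass C {X | IsIso (τ.app X)} := by
  refine ⟨?_, ?_, ?_, ?_⟩
  · exact fun X Y e hX => (NatTrans.isIso_app_iff_of_iso τ e).mp hX
  · intro X (_ : IsIso (τ.app X)) n
    exact NatTrans.isIso_app_shift τ X n
  · exact fun Tr hTr h₁ h₂ => NatTrans.isIso_app_obj₃ τ hTr h₁ h₂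
  · intro ι X (_ : ∀ i, IsIso (τ.app (X i)))
    exact NatTrans.isIso_app_sigma τ X

end NatTrans

lemma Adjunction.isIso_counit_app_obj {C D : Type} [Category C] [Category D] {F : C ⥤ D}
    {U : D ⥤ C} (adj : F ⊣ U) (A : C)
    [IsIso (adj.unit.app A)] : IsIso (adj.counit.app (F.obj A)) := by
  have : IsIso (F.map (adj.unit.app A) ≫ adj.counit.app (F.obj A)) := by
    rw [adj.left_triangle_components A]; exact IsIso.id _
  exact IsIso.of_isIso_comp_left (F.map (adj.unit.app A)) (adj.counit.app (F.obj A))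

section Adjunction

variable {C : Type} [Category C] [Preadditive C] [HasZeroObject C]
  [HasShift C ℤ] [∀ n : ℤ, (shiftFunctor C n).Additive] [Pretriangulated C]
variable {D : Type} [Category D] [Preadditive D] [HasZeroObject D]
  [HasShift D ℤ] [∀ n : ℤ, (shiftFunctor D n).Additive] [Pretriangulated D]
variable {F : C ⥤ D} {U : D ⥤ C} [F.CommShift ℤ] [F.IsTriangulated]
  [∀ ι : Type, PreservesColimitsOfShape (Discrete ι) U]

/- `adj.unit` and `adj.counit` commute with the shifts for the shift structure that `U`
inherits from `F` through `adj` (for which `U` is triangulated), not for an arbitrary one. -/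
lemma Adjunction.isLocalizingClass_setOf_isIso_unit_app [HasCoproducts.{0} C] (adj : F ⊣ U) :
    IsLocalizingClass C {X | IsIso (adj.unit.app X)} := by
  let := adj.rightAdjointCommShift ℤ
  have := adj.commShift_of_leftAdjoint ℤ
  have := adj.isTriangulated_rightAdjoint
  have := adj.leftAdjoint_preservesColimits
  exact isLocalizingClass_setOf_isIso_app adj.unit

lemma Adjunction.isLocalizingClass_setOf_isIso_counit_app [HasCoproducts.{0} D] (adj : F ⊣ U) :
    IsLocalizingClass D {Y | IsIso (adj.counit.app Y)} := by
  let := adj.rightAdjointCommShift ℤ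
  have := adj.commShift_of_leftAdjoint ℤ
  have := adj.isTriangulated_rightAdjoint
  have := adj.leftAdjoint_preservesColimits
  exact isLocalizingClass_setOf_isIso_app adj.counit

end Adjunction

end CategoryTheory

variable (S : Type) [Category S] [Preadditive S] [HasZeroObject S]
  [HasShift S ℤ] [∀ n : ℤ, (shiftFunctor S n).Additive] [Pretriangulated S]
  [HasCoproducts.{0} S]
variable (T : Type) [Category T] [Preadditive T] [HasZeroObject T]
  [HasShift T ℤ] [∀ n : ℤ, (shiftFunctor T n).Additive] [Pretriangulated T]
  [HasCoproducts.{0} T]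

/-- **The Cellularization Principle** (homotopy category form). Let `F ⊣ U` be an
adjoint pair of exact functors between compactly generated triangulated categories
with coproducts, with `U` preserving coproducts. If `K` is a set of compact objects
of `S` such that the unit `A → UFA` is an isomorphism for every `A ∈ K`, then `F` and
`U` restrict to mutually inverse equivalences between the localizing subcategory of
`S` generated by `K` and the localizing subcategory of `T` generated by `F(K)`:
`F` and `U` map these subcategories into one another, and the unit and counit are
isomorphisms on them. -/
theorem cellularization_principle
    (F : S ⥤ T) (U : T ⥤ S) (adj : F ⊣ U)
    [F.CommShift ℤ] [F.IsTriangulated] [U.CommShift ℤ] [U.IsTriangulated]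
    [∀ ι : Type, PreservesColimitsOfShape (Discrete ι) U]
    (hS : IsCompactlyGeneratedTriang S) (hT : IsCompactlyGeneratedTriang T)
    (K : Set S) (hK : ∀ A ∈ K, IsCompactObj S A)
    (hunit : ∀ A ∈ K, IsIso (adj.unit.app A)) :
    (∀ X ∈ locGen S K,
        F.obj X ∈ locGen T (F.obj '' K) ∧ IsIso (adj.unit.app X)) ∧
    (∀ Y ∈ locGen T (F.obj '' K),
        U.obj Y ∈ locGen S K ∧ IsIso (adj.counit.app Y)) := by
  have := adj.leftAdjoint_preservesColimits
  have hP : IsLocalizingClass S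
      (F.obj ⁻¹' locGen T (F.obj '' K) ∩ {X | IsIso (adj.unit.app X)}) :=
    (isLocalizingClass_locGen _).preimage.inter adj.isLocalizingClass_setOf_isIso_unit_app
  have hQ : IsLocalizingClass T (U.obj ⁻¹' locGen S K ∩ {Y | IsIso (adj.counit.app Y)}) :=
    (isLocalizingClass_locGen _).preimage.inter adj.isLocalizingClass_setOf_isIso_counit_app
  refine ⟨fun X hX => locGen_subset hP ?_ hX, fun Y hY => locGen_subset hQ ?_ hY⟩
  · exact fun A hA => ⟨subset_locGen _ (Set.mem_image_of_mem F.obj hA), hunit A hA⟩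
  · rintro _ ⟨A, hA, rfl⟩
    have := hunit A hA
    exact ⟨(isLocalizingClass_locGen K).1 _ _ (asIso (adj.unit.app A)) (subset_locGen K hA),
      adj.isIso_counit_app_obj A⟩
end
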